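/- Suppose θ, h₃ : I → ℝ are C¹ on an interval I with θ(t) ∉ (π/2)ℤ for all t, satisfying θ' = h₃/|sin 2θ| and h₃' = s₁h₄ + s₂h₅, where s₁ = sgn cos θ, s₂ = sgn sin θ and h₄, h₅ are constants. Then E(t) = h₃(t)²/2 + sgn(cos θ(t))cos²θ(t)·h₅ − sgn(sin θ(t))sin²θ(t)·h₄ is constant on I. -/

import Mathlib

/-!
Away from the zeros of `sin θ` and `cos θ` the signs `s₁ = sgn cos θ`, `s₂ = sgn sin θ` are
locally constant, so `E` is differentiable with
`E' = h₃ (s₁ h₄ + s₂ h₅) - (s₁ h₅ + s₂ h₄) sin 2θ · θ'`.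
Since `|sin 2θ| = s₁ s₂ sin 2θ` and `s₁² = s₂² = 1`, substituting `θ' = h₃ / |sin 2θ|` makes the two
terms cancel, and `E' = 0` on the interval forces `E` to be constant.
-/

open Real Filter Topology

namespace Real

lemma sign_mul_self_eq_abs (r : ℝ) : sign r * r = |r| := by
  rcases lt_trichotomy r 0 with hr | rfl | hr
  · rw [sign_of_neg hr, abs_of_neg hr]; ring
  · simp
  · rw [sign_of_pos hr, abs_of_pos hr]; ring

lemma sign_mul_sign_self_of_ne_zero {r : ℝ} (hr : r ≠ 0) : sign r * sign r = 1 := by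
  rcases sign_apply_eq_of_ne_zero r hr with h | h <;> rw [h] <;> norm_num

lemma abs_sin_two_mul (x : ℝ) :
    |sin (2 * x)| = 2 * (sign (sin x) * sin x) * (sign (cos x) * cos x) := by
  rw [sign_mul_self_eq_abs, sign_mul_self_eq_abs, sin_two_mul, abs_mul, abs_mul, abs_two]

lemma sin_ne_zero_of_forall_ne_int_mul_pi_div_two {x : ℝ} (hx : ∀ n : ℤ, x ≠ n * (π / 2)) :
    sin x ≠ 0 := fun h ↦ by
  obtain ⟨n, hn⟩ := sin_eq_zero_iff.mp h
  exact hx (2 * n) (by push_cast; linarith)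

lemma cos_ne_zero_of_forall_ne_int_mul_pi_div_two {x : ℝ} (hx : ∀ n : ℤ, x ≠ n * (π / 2)) :
    cos x ≠ 0 := fun h ↦ by
  obtain ⟨n, hn⟩ := cos_eq_zero_iff.mp h
  exact hx (2 * n + 1) (by push_cast [hn]; ring)

end Real

lemma ContinuousAt.eventually_sign_eq {f : ℝ → ℝ} {t : ℝ} (hf : ContinuousAt f t) (ht : f t ≠ 0) :
    ∀ᶠ u in 𝓝 t, sign (f u) = sign (f t) := by
  rcases ht.lt_or_gt with h | h
  · filter_upwards [hf.eventually_lt_const h] with u hu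
    rw [sign_of_neg h, sign_of_neg hu]
  · filter_upwards [hf.eventually_const_lt h] with u hu
    rw [sign_of_pos h, sign_of_pos hu]

lemma HasDerivAt.sign_mul {f φ : ℝ → ℝ} {φ' t : ℝ} (hf : ContinuousAt f t) (ht : f t ≠ 0)
    (hφ : HasDerivAt φ φ' t) :
    HasDerivAt (fun u ↦ sign (f u) * φ u) (sign (f t) * φ') t :=
  (hφ.const_mul _).congr_of_eventuallyEq <| (hf.eventually_sign_eq ht).mono fun u hu ↦ by
    simp only [hu]

noncomputable def thetaEnergy (h4 h5 : ℝ) (θ h3 : ℝ → ℝ) (t : ℝ) : ℝ :=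
  (h3 t) ^ 2 / 2
    + sign (cos (θ t)) * (cos (θ t)) ^ 2 * h5
    - sign (sin (θ t)) * (sin (θ t)) ^ 2 * h4

lemma hasDerivAt_thetaEnergy {h4 h5 t : ℝ} {θ h3 : ℝ → ℝ}
    (hs : sin (θ t) ≠ 0) (hc : cos (θ t) ≠ 0)
    (hθ : HasDerivAt θ (h3 t / |sin (2 * θ t)|) t)
    (hh3 : HasDerivAt h3 (sign (cos (θ t)) * h4 + sign (sin (θ t)) * h5) t) :
    HasDerivAt (thetaEnergy h4 h5 θ h3) 0 t := by
  have hE := (((hh3.fun_pow 2).div_const 2).fun_add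
      (((hθ.cos.fun_pow 2).sign_mul hθ.cos.continuousAt hc).mul_const h5)).fun_sub
      (((hθ.sin.fun_pow 2).sign_mul hθ.sin.continuousAt hs).mul_const h4)
  refine hE.congr_deriv ?_
  rw [abs_sin_two_mul]
  have hs' := sign_mul_sign_self_of_ne_zero hs
  have hc' := sign_mul_sign_self_of_ne_zero hc
  have hs0 : sign (sin (θ t)) ≠ 0 := sign_eq_zero_iff.not.mpr hs
  have hc0 : sign (cos (θ t)) ≠ 0 := sign_eq_zero_iff.not.mpr hc
  field_simp
  linear_combination 2 * sign (cos (θ t)) * sin (θ t) * cos (θ t) * h3 t * h5 * hs'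
    + 2 * sign (sin (θ t)) * sin (θ t) * cos (θ t) * h3 t * h4 * hc'

theorem energy_constant_theta_system_general
    (a b : ℝ) (h4 h5 : ℝ)
    (θ h3 : ℝ → ℝ)
    (hθ : ∀ t ∈ Set.Ioo a b, ∀ n : ℤ, θ t ≠ n * (π / 2))
    (hdθ : ∀ t ∈ Set.Ioo a b,
      HasDerivAt θ (h3 t / |Real.sin (2 * θ t)|) t)
    (hdh3 : ∀ t ∈ Set.Ioo a b,
      HasDerivAt h3 (Real.sign (Real.cos (θ t)) * h4
        + Real.sign (Real.sin (θ t)) * h5) t) :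
    ∀ t₁ ∈ Set.Ioo a b, ∀ t₂ ∈ Set.Ioo a b,
      (h3 t₁) ^ 2 / 2
        + Real.sign (Real.cos (θ t₁)) * (Real.cos (θ t₁)) ^ 2 * h5
        - Real.sign (Real.sin (θ t₁)) * (Real.sin (θ t₁)) ^ 2 * h4
      = (h3 t₂) ^ 2 / 2
        + Real.sign (Real.cos (θ t₂)) * (Real.cos (θ t₂)) ^ 2 * h5
        - Real.sign (Real.sin (θ t₂)) * (Real.sin (θ t₂)) ^ 2 * h4 := by
  intro t₁ ht₁ t₂ ht₂
  have hE : ∀ t ∈ Set.Ioo a b, HasDerivAt (thetaEnergy h4 h5 θ h3) 0 t := fun t ht ↦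
    hasDerivAt_thetaEnergy (sin_ne_zero_of_forall_ne_int_mul_pi_div_two (hθ t ht))
      (cos_ne_zero_of_forall_ne_int_mul_pi_div_two (hθ t ht)) (hdθ t ht) (hdh3 t ht)
  exact isOpen_Ioo.is_const_of_deriv_eq_zero isPreconnected_Ioo
    (fun t ht ↦ (hE t ht).differentiableAt.differentiableWithinAt) (fun t ht ↦ (hE t ht).deriv)
    ht₁ ht₂

theorem energy_constant_theta_system
    (a b : ℝ) (hab : a < b) (h4 h5 : ℝ)
    (θ h3 : ℝ → ℝ)
    (hθ : ∀ t ∈ Set.Ioo a b, ∀ n : ℤ, θ t ≠ n * (π / 2))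
    (hdθ : ∀ t ∈ Set.Ioo a b,
      HasDerivAt θ (h3 t / |Real.sin (2 * θ t)|) t)
    (hdh3 : ∀ t ∈ Set.Ioo a b,
      HasDerivAt h3 (Real.sign (Real.cos (θ t)) * h4
        + Real.sign (Real.sin (θ t)) * h5) t) :
    ∀ t₁ ∈ Set.Ioo a b, ∀ t₂ ∈ Set.Ioo a b,
      (h3 t₁) ^ 2 / 2
        + Real.sign (Real.cos (θ t₁)) * (Real.cos (θ t₁)) ^ 2 * h5
        - Real.sign (Real.sin (θ t₁)) * (Real.sin (θ t₁)) ^ 2 * h4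
      = (h3 t₂) ^ 2 / 2
        + Real.sign (Real.cos (θ t₂)) * (Real.cos (θ t₂)) ^ 2 * h5
        - Real.sign (Real.sin (θ t₂)) * (Real.sin (θ t₂)) ^ 2 * h4 :=
  energy_constant_theta_system_general a b h4 h5 θ h3 hθ hdθ hdh3
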